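/- Let C' := {x ∈ ℝⁿ : x ≥ 0 entrywise and ‖x‖₂ ≤ 1}. Then for every y ∈ ℝⁿ, the Euclidean projection of y onto C' equals y₊ / max{1, ‖y₊‖₂}, where y₊ is the entrywise positive part of y, i.e. (y₊)_i = max{0, y_i} for all i; that is, y₊ / max{1, ‖y₊‖₂} is the unique minimizer of ‖y − x‖₂² over x ∈ C'. -/

import Mathlib

/-!
Write `P = y₊`, `t = max 1 ‖P‖` and `p = t⁻¹ • P`. Since `y - P` is the negative part of `y`, it is
orthogonal to `P` and has nonpositive inner product with every `x ≥ 0`; splitting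
`y - p = (y - P) + (1 - t⁻¹) • P` and using `⟪P, x⟫ ≤ ‖P‖` for `‖x‖ ≤ 1` gives the variational
inequality `⟪y - p, x - p⟫ ≤ 0` on the feasible set. Expanding `‖y - x‖²` around `p` then yields
`‖y - p‖² + ‖x - p‖² ≤ ‖y - x‖²`, i.e. minimality and uniqueness at once.
-/

open RealInnerProductSpace

noncomputable section

/-- The entrywise positive part `y₊` of a vector. -/
def posPart {n : ℕ} (y : EuclideanSpace ℝ (Fin n)) : EuclideanSpace ℝ (Fin n) :=
  (WithLp.equiv 2 _).symm (fun i => max 0 (y i))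

theorem max_sub_mul_max_sub_eq_zero {α : Type*} [CommRing α] [LinearOrder α] (a b : α) :
    (max a b - a) * (max a b - b) = 0 := by
  rcases le_total a b with h | h <;> simp [h]

theorem norm_sub_sq_add_norm_sub_sq_le_of_inner_nonpos {E : Type*} [NormedAddCommGroup E]
    [InnerProductSpace ℝ E] {x y p : E} (h : ⟪y - p, x - p⟫ ≤ 0) :
    ‖y - p‖ ^ 2 + ‖x - p‖ ^ 2 ≤ ‖y - x‖ ^ 2 := by
  have : y - x = (y - p) - (x - p) := by abel
  rw [this, norm_sub_sq_real (y - p) (x - p)]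
  linarith

namespace posPart

variable {n : ℕ}

@[simp]
theorem apply (y : EuclideanSpace ℝ (Fin n)) (i : Fin n) : posPart y i = max 0 (y i) := rfl

theorem nonneg (y : EuclideanSpace ℝ (Fin n)) (i : Fin n) : 0 ≤ posPart y i := le_max_left _ _

theorem inner_sub_posPart_self (y : EuclideanSpace ℝ (Fin n)) :
    ⟪y - posPart y, posPart y⟫ = 0 := by
  simp only [PiLp.inner_apply, PiLp.sub_apply, apply, RCLike.inner_apply, conj_trivial]
  refine Finset.sum_eq_zero fun i _ => ?_
  rcases le_total (y i) 0 with h | h <;> simp [h]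

theorem inner_sub_posPart_nonpos (y : EuclideanSpace ℝ (Fin n)) {x : EuclideanSpace ℝ (Fin n)}
    (hx : ∀ i, 0 ≤ x i) : ⟪y - posPart y, x⟫ ≤ 0 := by
  simp only [PiLp.inner_apply, PiLp.sub_apply, apply, RCLike.inner_apply, conj_trivial]
  refine Finset.sum_nonpos fun i _ => ?_
  rcases le_total (y i) 0 with h | h
  · simpa [h] using mul_nonneg (hx i) (neg_nonneg.mpr h)
  · simp [h]

end posPart

theorem inner_sub_smul_posPart_nonpos {n : ℕ} (y : EuclideanSpace ℝ (Fin n))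
    {x : EuclideanSpace ℝ (Fin n)} (hx : ∀ i, 0 ≤ x i) (hx1 : ‖x‖ ≤ 1) :
    ⟪y - (max 1 ‖posPart y‖)⁻¹ • posPart y, x - (max 1 ‖posPart y‖)⁻¹ • posPart y⟫ ≤ 0 := by
  set P := posPart y
  set t := max 1 ‖P‖
  have ht : 0 < t := lt_max_of_lt_left one_pos
  have hexpand : ⟪y - t⁻¹ • P, x - t⁻¹ • P⟫ =
      ⟪y - P, x⟫ - t⁻¹ * ⟪y - P, P⟫ + (1 - t⁻¹) * (⟪P, x⟫ - t⁻¹ * ‖P‖ ^ 2) := by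
    have : y - t⁻¹ • P = (y - P) + (1 - t⁻¹) • P := by module
    rw [this]
    simp only [inner_add_left, inner_sub_right, inner_smul_left, inner_smul_right,
      real_inner_self_eq_norm_sq, conj_trivial]
    ring
  -- the slack vanishes because `t = 1` or `t = ‖P‖`
  have hslack : (1 - t⁻¹) * (‖P‖ - t⁻¹ * ‖P‖ ^ 2) = 0 := by
    have := max_sub_mul_max_sub_eq_zero 1 ‖P‖
    field_simp
    linear_combination ‖P‖ * this
  have hPx : ⟪P, x⟫ ≤ ‖P‖ :=
    (real_inner_le_norm P x).trans (mul_le_of_le_one_right (norm_nonneg P) hx1)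
  have ht1 : 0 ≤ 1 - t⁻¹ := sub_nonneg.mpr (inv_le_one_of_one_le₀ (le_max_left _ _))
  rw [hexpand, posPart.inner_sub_posPart_self, mul_zero, sub_zero]
  nlinarith [posPart.inner_sub_posPart_nonpos y hx, mul_le_mul_of_nonneg_left hPx ht1]

theorem norm_inv_max_one_smul_le_one {E : Type*} [NormedAddCommGroup E] [NormedSpace ℝ E]
    (v : E) : ‖(max 1 ‖v‖)⁻¹ • v‖ ≤ 1 := by
  have ht : 0 < max 1 ‖v‖ := lt_max_of_lt_left one_pos
  rw [norm_smul, norm_inv, Real.norm_of_nonneg ht.le, inv_mul_le_one₀ ht]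
  exact le_max_right _ _

theorem projection_onto_nonneg_l2_ball_general
    (n : ℕ) (y : EuclideanSpace ℝ (Fin n)) :
    (max 1 ‖posPart y‖)⁻¹ • posPart y ∈
        {x : EuclideanSpace ℝ (Fin n) | (∀ i, 0 ≤ x i) ∧ ‖x‖ ≤ 1} ∧
    (∀ x : EuclideanSpace ℝ (Fin n), (∀ i, 0 ≤ x i) → ‖x‖ ≤ 1 →
      ‖y - (max 1 ‖posPart y‖)⁻¹ • posPart y‖ ^ 2 ≤ ‖y - x‖ ^ 2) ∧
    (∀ x : EuclideanSpace ℝ (Fin n), (∀ i, 0 ≤ x i) → ‖x‖ ≤ 1 →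
      ‖y - x‖ ^ 2 = ‖y - (max 1 ‖posPart y‖)⁻¹ • posPart y‖ ^ 2 →
      x = (max 1 ‖posPart y‖)⁻¹ • posPart y) := by
  set p := (max 1 ‖posPart y‖)⁻¹ • posPart y
  have hpyth : ∀ x : EuclideanSpace ℝ (Fin n), (∀ i, 0 ≤ x i) → ‖x‖ ≤ 1 →
      ‖y - p‖ ^ 2 + ‖x - p‖ ^ 2 ≤ ‖y - x‖ ^ 2 := fun x hx hx1 =>
    norm_sub_sq_add_norm_sub_sq_le_of_inner_nonpos (inner_sub_smul_posPart_nonpos y hx hx1)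
  refine ⟨⟨fun i => ?_, norm_inv_max_one_smul_le_one _⟩, fun x hx hx1 => ?_,
    fun x hx hx1 heq => ?_⟩
  · exact mul_nonneg (inv_nonneg.mpr (zero_le_one.trans (le_max_left _ _))) (posPart.nonneg y i)
  · linarith [hpyth x hx hx1, sq_nonneg ‖x - p‖]
  · have hsq : ‖x - p‖ ^ 2 = 0 := le_antisymm (by linarith [hpyth x hx hx1]) (sq_nonneg _)
    simpa [sub_eq_zero] using hsq

/-- Lemma S-4, projection onto the nonnegative `ℓ₂` ball: for
`C' = {x ∈ ℝⁿ : x ≥ 0, ‖x‖₂ ≤ 1}` and any `y ∈ ℝⁿ`, the point `y₊ / max{1, ‖y₊‖₂}`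
is the unique minimizer of `x ↦ ‖y − x‖₂²` over `C'`. -/
theorem projection_onto_nonneg_l2_ball
    (n : ℕ) (hn : 1 ≤ n) (y : EuclideanSpace ℝ (Fin n)) :
    (max 1 ‖posPart y‖)⁻¹ • posPart y ∈
        {x : EuclideanSpace ℝ (Fin n) | (∀ i, 0 ≤ x i) ∧ ‖x‖ ≤ 1} ∧
    (∀ x : EuclideanSpace ℝ (Fin n), (∀ i, 0 ≤ x i) → ‖x‖ ≤ 1 →
      ‖y - (max 1 ‖posPart y‖)⁻¹ • posPart y‖ ^ 2 ≤ ‖y - x‖ ^ 2) ∧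
    (∀ x : EuclideanSpace ℝ (Fin n), (∀ i, 0 ≤ x i) → ‖x‖ ≤ 1 →
      ‖y - x‖ ^ 2 = ‖y - (max 1 ‖posPart y‖)⁻¹ • posPart y‖ ^ 2 →
      x = (max 1 ‖posPart y‖)⁻¹ • posPart y) :=
  projection_onto_nonneg_l2_ball_general n y
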